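/- Let z₁,…,z_N and c₁,…,c_{N-1} be complex numbers with no element in common, all z_j lying on a common line, with the c_j interlacing the z_j along that line (after identifying the line with ℝ: z_1 ≤ c_1 ≤ z_2 ≤ c_2 ≤ … ≤ c_{N-1} ≤ z_N). Then there exists a normal M ∈ M_N(ℂ) with eigenvalues z₁,…,z_N having a rank-(N-1) normal compression with eigenvalues c₁,…,c_{N-1}. -/
import Mathlib


open Matrix BigOperators Finset

noncomputable section

/-- Numerical range of a complex matrix. -/
def NumRange {n : ℕ} (M : Matrix (Fin n) (Fin n) ℂ) : Set ℂ :=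
  { c | ∃ u : Fin n → ℂ, star u ⬝ᵥ u = 1 ∧ star u ⬝ᵥ M.mulVec u = c }

/-- `C` is a rank-`k` compression of `M`: `C` represents `P_S M |_S` in some
orthonormal basis of a `k`-dimensional subspace `S`. -/
def IsCompression {N k : ℕ} (M : Matrix (Fin N) (Fin N) ℂ)
    (C : Matrix (Fin k) (Fin k) ℂ) : Prop :=
  ∃ f : Fin k → (Fin N → ℂ),
    (∀ i j, star (f i) ⬝ᵥ f j = if i = j then 1 else 0) ∧
    (∀ i j, C i j = star (f i) ⬝ᵥ M.mulVec (f j))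

/-- `diag(a,b)` is a compression of `M`. -/
def IsDiagCompression {N : ℕ} (M : Matrix (Fin N) (Fin N) ℂ) (a b : ℂ) : Prop :=
  ∃ u w : Fin N → ℂ,
    star u ⬝ᵥ u = 1 ∧ star w ⬝ᵥ w = 1 ∧ star u ⬝ᵥ w = 0 ∧
    star u ⬝ᵥ M.mulVec u = a ∧ star w ⬝ᵥ M.mulVec w = b ∧
    star u ⬝ᵥ M.mulVec w = 0 ∧ star w ⬝ᵥ M.mulVec u = 0

/-- The rank-`k` numerical range `Λ_k(M)`. -/
def rankNumRange {N : ℕ} (k : ℕ) (M : Matrix (Fin N) (Fin N) ℂ) : Set ℂ :=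
  { c | ∃ P : Matrix (Fin N) (Fin N) ℂ,
      P.IsHermitian ∧ P * P = P ∧ P.rank = k ∧ P * M * P = c • P }

/-- `M` has an orthonormal basis of eigenvectors with eigenvalue list `z`. -/
def HasONEigenbasis {N : ℕ} (M : Matrix (Fin N) (Fin N) ℂ) (z : Fin N → ℂ) : Prop :=
  ∃ f : Fin N → (Fin N → ℂ),
    (∀ i j, star (f i) ⬝ᵥ f j = if i = j then 1 else 0) ∧
    (∀ j, M.mulVec (f j) = z j • f j)

/-- 2D cross product of complex numbers viewed as plane vectors. -/
def cross2 (p q : ℂ) : ℝ := p.re * q.im - p.im * q.re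

lemma normal_of_hasONEigenbasis {N : ℕ} {M : Matrix (Fin N) (Fin N) ℂ} {z : Fin N → ℂ}
    (h : HasONEigenbasis M z) : M * Mᴴ = Mᴴ * M := by
  obtain ⟨f, horth, heig⟩ := h
  set U : Matrix (Fin N) (Fin N) ℂ := Matrix.of fun a j => f j a with hU
  have hUU : Uᴴ * U = 1 := by
    ext i j
    simpa [Matrix.mul_apply, Matrix.conjTranspose_apply, dotProduct, Matrix.one_apply, U] using
      horth i j
  have hUU' : U * Uᴴ = 1 := mul_eq_one_comm.mp hUU
  have hMU : M * U = U * Matrix.diagonal z := by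
    ext a j
    have h1 := congrFun (heig j) a
    simp only [Matrix.mulVec, dotProduct, Pi.smul_apply, smul_eq_mul] at h1
    simp [Matrix.mul_apply, Matrix.diagonal_apply, U, h1, mul_comm]
  have hM : M = U * Matrix.diagonal z * Uᴴ := by
    calc M = M * (U * Uᴴ) := by rw [hUU', mul_one]
    _ = (M * U) * Uᴴ := by rw [mul_assoc]
    _ = U * Matrix.diagonal z * Uᴴ := by rw [hMU]
  have hdiag : Matrix.diagonal z * (Matrix.diagonal z)ᴴ
      = (Matrix.diagonal z)ᴴ * Matrix.diagonal z := by
    simp [Matrix.diagonal_conjTranspose, Matrix.diagonal_mul_diagonal, mul_comm]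
  rw [hM]
  have hcancel : ∀ X : Matrix (Fin N) (Fin N) ℂ, Uᴴ * (U * X) = X := fun X => by
    rw [← Matrix.mul_assoc, hUU, one_mul]
  simp only [Matrix.conjTranspose_mul, Matrix.conjTranspose_conjTranspose, Matrix.mul_assoc,
    hcancel]
  rw [← Matrix.mul_assoc (Matrix.diagonal z), hdiag, Matrix.mul_assoc]

section CoreWeights
open Polynomial

lemma core_weights {m : ℕ} (x : Fin (m+1) → ℝ) (y : Fin m → ℝ)
    (h1 : ∀ j : Fin m, x j.castSucc < y j) (h2 : ∀ j : Fin m, y j < x j.succ) :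
    ∃ B : Fin m → ℝ, (∀ j, 0 ≤ B j) ∧
      (∀ i, ∑ j, B j / (x i - y j) = x i - (∑ i, x i - ∑ j, y j)) := by
  have hx : StrictMono x := Fin.strictMono_iff_lt_succ.mpr fun i => (h1 i).trans (h2 i)
  have cmp1 : ∀ (i : Fin (m+1)) (j : Fin m), i.val ≤ j.val → x i < y j := by
    intro i j h
    exact lt_of_le_of_lt (hx.monotone (show i ≤ j.castSucc from h)) (h1 j)
  have cmp2 : ∀ (i : Fin (m+1)) (j : Fin m), j.val < i.val → y j < x i := by
    intro i j h
    exact lt_of_lt_of_le (h2 j) (hx.monotone (show j.succ ≤ i from h))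
  have hy : StrictMono y := by
    intro a b hab
    exact lt_trans (cmp2 b.castSucc a hab) (h1 b)
  have hyx_iff : ∀ (i : Fin (m+1)) (j : Fin m), y j < x i ↔ (j.val < i.val) := by
    intro i j
    constructor
    · intro h
      by_contra hc
      exact absurd (cmp1 i j (by omega)) (not_lt.mpr h.le)
    · exact cmp2 i j
  have hne : ∀ (i : Fin (m+1)) (j : Fin m), x i - y j ≠ 0 := by
    intro i j
    rcases le_or_gt i.val j.val with h | h
    · exact sub_ne_zero_of_ne (cmp1 i j h).ne
    · exact sub_ne_zero_of_ne (cmp2 i j h).ne'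
  -- polynomials
  set p : ℝ[X] := ∏ i, (X - C (x i)) with hp
  set q : ℝ[X] := ∏ j, (X - C (y j)) with hq
  set d : ℝ := ∑ i, x i - ∑ j, y j with hd
  set r : ℝ[X] := (X - C d) * q - p with hr
  have hpm : p.Monic := monic_prod_of_monic _ _ fun i _ => monic_X_sub_C _
  have hqm : q.Monic := monic_prod_of_monic _ _ fun i _ => monic_X_sub_C _
  have hpd : p.natDegree = m + 1 := by
    rw [hp, natDegree_prod _ _ fun i _ => X_sub_C_ne_zero (x i)]
    simp [natDegree_X_sub_C]
  have hqd : q.natDegree = m := by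
    rw [hq, natDegree_prod _ _ fun i _ => X_sub_C_ne_zero (y i)]
    simp [natDegree_X_sub_C]
  have hlm : ((X - C d) * q).Monic := (monic_X_sub_C d).mul hqm
  have hld : ((X - C d) * q).natDegree = m + 1 := by
    rw [natDegree_mul (X_sub_C_ne_zero d) hqm.ne_zero, natDegree_X_sub_C, hqd]
    omega
  have hrdeg : r.degree < (m : ℕ) := by
    rw [degree_lt_iff_coeff_zero]
    intro k hk
    have hk' : m ≤ k := by exact_mod_cast hk
    rw [hr, coeff_sub]
    by_cases hk1 : k = m
    · rw [hk1]
      have e1 : ((X - C d) * q).nextCoeff = ((X - C d) * q).coeff m := by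
        rw [nextCoeff_of_natDegree_pos (by rw [hld]; omega), hld]
        norm_num
      have e2 : p.nextCoeff = p.coeff m := by
        rw [nextCoeff_of_natDegree_pos (by rw [hpd]; omega), hpd]
        norm_num
      have e3 : ((X - C d) * q).nextCoeff = -d + -∑ j, y j := by
        rw [Monic.nextCoeff_mul (monic_X_sub_C d) hqm, nextCoeff_X_sub_C, hq,
          prod_X_sub_C_nextCoeff]
      have e4 : p.nextCoeff = -∑ i, x i := by
        rw [hp, prod_X_sub_C_nextCoeff]
      rw [← e1, ← e2, e3, e4, hd]
      ring
    · by_cases hk2 : k = m + 1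
      · rw [hk2]
        have ea : ((X - C d) * q).coeff (m + 1) = 1 := by
          have h' := hlm.coeff_natDegree
          rwa [hld] at h'
        have eb : p.coeff (m + 1) = 1 := by
          have h' := hpm.coeff_natDegree
          rwa [hpd] at h'
        rw [ea, eb, sub_self]
      · rw [coeff_eq_zero_of_natDegree_lt (by omega), coeff_eq_zero_of_natDegree_lt (by omega),
          sub_self]
    -- interpolation
  have hinj : Set.InjOn y ↑(univ : Finset (Fin m)) := fun a _ b _ h => hy.injective h
  have hinterp : r = Lagrange.interpolate univ y fun j => r.eval (y j) :=
    Lagrange.eq_interpolate hinj (by rw [card_univ, Fintype.card_fin]; exact hrdeg)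
  set D : Fin m → ℝ := fun j => ∏ k ∈ univ.erase j, (y j - y k) with hD
  have hDne : ∀ j, D j ≠ 0 := fun j => prod_ne_zero_iff.mpr fun k hk =>
    sub_ne_zero_of_ne fun h => (mem_erase.mp hk).1 (hy.injective h).symm
  refine ⟨fun j => -(p.eval (y j)) * (D j)⁻¹, ?_, ?_⟩
  · -- positivity
    intro j
    show 0 ≤ -(p.eval (y j)) * (D j)⁻¹
    have hP : p.eval (y j) = ∏ i, (y j - x i) := by rw [hp, eval_prod]; simp
    have hfilP : univ.filter (fun i : Fin (m+1) => y j < x i) = Ioi j.castSucc := by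
      ext i
      simp only [mem_filter, mem_univ, true_and, mem_Ioi]
      rw [hyx_iff, Fin.lt_def, Fin.coe_castSucc]
    have hcardP : #(univ.filter fun i : Fin (m+1) => y j < x i) = m - j.val := by
      rw [hfilP, Fin.card_Ioi, Fin.coe_castSucc]
      omega
    have hfilD : (univ.erase j).filter (fun k => y j < y k) = Ioi j := by
      ext k
      simp only [mem_filter, mem_erase, mem_univ, true_and, mem_Ioi, and_true, hy.lt_iff_lt]
      constructor
      · exact fun h => h.2
      · exact fun h => ⟨h.ne', h⟩
    have hcardD : #((univ.erase j).filter fun k => y j < y k) = m - 1 - j.val := by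
      rw [hfilD, Fin.card_Ioi]
    set A1 : ℝ := ∏ i ∈ univ.filter (fun i : Fin (m+1) => y j < x i), (x i - y j) with hA1
    set A2 : ℝ := ∏ i ∈ univ.filter (fun i : Fin (m+1) => ¬ y j < x i), (y j - x i) with hA2
    set A3 : ℝ := ∏ k ∈ (univ.erase j).filter (fun k => y j < y k), (y k - y j) with hA3
    set A4 : ℝ := ∏ k ∈ (univ.erase j).filter (fun k => ¬ y j < y k), (y j - y k) with hA4
    have hA1pos : 0 < A1 := prod_pos fun i hi => sub_pos.mpr (mem_filter.mp hi).2
    have hA2pos : 0 < A2 := by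
      refine prod_pos fun i hi => sub_pos.mpr ?_
      have h' := (mem_filter.mp hi).2
      rcases lt_or_eq_of_le (not_lt.mp h') with h'' | h''
      · exact h''
      · exact absurd (sub_eq_zero_of_eq h'') (hne i j)
    have hA3pos : 0 < A3 := prod_pos fun k hk => sub_pos.mpr (mem_filter.mp hk).2
    have hA4pos : 0 < A4 := by
      refine prod_pos fun k hk => sub_pos.mpr ?_
      obtain ⟨hk1, hk2⟩ := mem_filter.mp hk
      rcases lt_or_eq_of_le (not_lt.mp hk2) with h'' | h''
      · exact h''
      · exact absurd (hy.injective h'') (mem_erase.mp hk1).1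
    have hPeq : p.eval (y j) = (-1:ℝ)^(m - j.val) * A1 * A2 := by
      rw [hP, ← prod_filter_mul_prod_filter_not univ (fun i : Fin (m+1) => y j < x i)]
      have : ∏ i ∈ univ.filter (fun i : Fin (m+1) => y j < x i), (y j - x i)
          = (-1:ℝ)^(m - j.val) * A1 := by
        rw [hA1, ← hcardP, ← prod_const, ← prod_mul_distrib]
        exact prod_congr rfl fun i _ => by ring
      rw [this, hA2, mul_assoc]
    have hDeq : D j = (-1:ℝ)^(m - 1 - j.val) * A3 * A4 := by
      show ∏ k ∈ univ.erase j, (y j - y k) = _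
      rw [← prod_filter_mul_prod_filter_not (univ.erase j) (fun k => y j < y k)]
      have : ∏ k ∈ (univ.erase j).filter (fun k => y j < y k), (y j - y k)
          = (-1:ℝ)^(m - 1 - j.val) * A3 := by
        rw [hA3, ← hcardD, ← prod_const, ← prod_mul_distrib]
        exact prod_congr rfl fun k _ => by ring
      rw [this, hA4, mul_assoc]
    obtain ⟨t, ht1, ht2⟩ : ∃ t, m - j.val = t + 1 ∧ m - 1 - j.val = t := by
      have := j.isLt; exact ⟨m - 1 - j.val, by omega, rfl⟩
    have hsign : (-1:ℝ)^(m - j.val) * (-1:ℝ)^(m - 1 - j.val) = -1 := by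
      rw [ht1, ht2, ← pow_add]
      exact Odd.neg_one_pow ⟨t, by ring⟩
    have hPD : p.eval (y j) * D j < 0 := by
      have heq : p.eval (y j) * D j
          = ((-1:ℝ)^(m - j.val) * (-1:ℝ)^(m - 1 - j.val)) * (A1 * A2 * (A3 * A4)) := by
        rw [hPeq, hDeq]; ring
      rw [heq, hsign]
      have : 0 < A1 * A2 * (A3 * A4) := by positivity
      linarith
    have hrw : -(p.eval (y j)) * (D j)⁻¹ = (-(p.eval (y j) * D j)) / (D j)^2 := by
      rw [sq]
      field_simp [hDne j]
    rw [hrw]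
    apply div_nonneg (by linarith) (sq_nonneg _)
  · -- the identity
    intro i
    show ∑ jj, -(p.eval (y jj)) * (D jj)⁻¹ / (x i - y jj) = x i - d
    have hq_eval : q.eval (x i) = ∏ k, (x i - y k) := by rw [hq, eval_prod]; simp
    have hqne : q.eval (x i) ≠ 0 := by
      rw [hq_eval]; exact prod_ne_zero_iff.mpr fun k _ => hne i k
    have hp0 : p.eval (x i) = 0 := by
      rw [hp, eval_prod]
      exact prod_eq_zero (mem_univ i) (by simp)
    have hre : r.eval (x i) = (x i - d) * q.eval (x i) := by
      rw [hr]; simp [hp0]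
    have hq0 : ∀ jj : Fin m, q.eval (y jj) = 0 := fun jj => by
      rw [hq, eval_prod]
      exact prod_eq_zero (mem_univ jj) (by simp)
    have hry : ∀ jj : Fin m, r.eval (y jj) = -(p.eval (y jj)) := fun jj => by
      rw [hr]; simp [hq0 jj]
    have hbasis : ∀ jj : Fin m,
        (Lagrange.basis univ y jj).eval (x i) = (D jj)⁻¹ * ∏ k ∈ univ.erase jj, (x i - y k) := by
      intro jj
      rw [Lagrange.basis, eval_prod]
      calc ∏ k ∈ univ.erase jj, (Lagrange.basisDivisor (y jj) (y k)).eval (x i)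
          = ∏ k ∈ univ.erase jj, ((y jj - y k)⁻¹ * (x i - y k)) := by
            exact prod_congr rfl fun k _ => by simp [Lagrange.basisDivisor]
        _ = (∏ k ∈ univ.erase jj, (y jj - y k)⁻¹) * ∏ k ∈ univ.erase jj, (x i - y k) :=
            prod_mul_distrib
        _ = (D jj)⁻¹ * ∏ k ∈ univ.erase jj, (x i - y k) := by
            rw [hD, ← prod_inv_distrib]
    have hkey : (x i - d) * q.eval (x i)
        = ∑ jj, -(p.eval (y jj)) * (D jj)⁻¹ * ∏ k ∈ univ.erase jj, (x i - y k) := by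
      have h' := congrArg (Polynomial.eval (x i)) hinterp
      rw [hre] at h'
      rw [h', Lagrange.interpolate_apply, eval_finset_sum]
      refine sum_congr rfl fun jj _ => ?_
      rw [eval_mul, eval_C, hbasis jj, hry jj]
      ring
    have hterm : ∀ jj : Fin m,
        -(p.eval (y jj)) * (D jj)⁻¹ * ∏ k ∈ univ.erase jj, (x i - y k)
        = -(p.eval (y jj)) * (D jj)⁻¹ / (x i - y jj) * q.eval (x i) := by
      intro jj
      have h1 : (x i - y jj) * ∏ k ∈ univ.erase jj, (x i - y k) = q.eval (x i) := by
        rw [hq_eval]; exact mul_prod_erase univ (fun k => x i - y k) (mem_univ jj)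
      rw [← h1]
      field_simp [hDne jj, hne i jj]
    rw [funext hterm, ← sum_mul] at hkey
    exact mul_right_cancel₀ hqne hkey.symm

end CoreWeights

theorem stmt_8 {N : ℕ} (z : Fin N → ℂ) (c : Fin (N - 1) → ℂ)
    (hne : ∀ i j, z i ≠ c j)
    (α β : ℂ) (hβ : β ≠ 0) (x : Fin N → ℝ) (y : Fin (N - 1) → ℝ)
    (hzx : ∀ i, z i = α + (x i : ℂ) * β)
    (hcy : ∀ j, c j = α + (y j : ℂ) * β)
    (hinter : ∀ j : Fin (N - 1),
      x ⟨j, by omega⟩ ≤ y j ∧ y j ≤ x ⟨(j : ℕ) + 1, by omega⟩) :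
    ∃ M : Matrix (Fin N) (Fin N) ℂ, M * Mᴴ = Mᴴ * M ∧ HasONEigenbasis M z ∧
      ∃ C : Matrix (Fin (N - 1)) (Fin (N - 1)) ℂ,
        IsCompression M C ∧ C * Cᴴ = Cᴴ * C ∧ HasONEigenbasis C c := by
  rcases Nat.eq_zero_or_pos N with hN | hN
  · subst hN
    refine ⟨0, Subsingleton.elim _ _, ⟨Fin.elim0, fun i => i.elim0, fun j => j.elim0⟩,
      0, ⟨Fin.elim0, fun i => i.elim0, fun i => i.elim0⟩, by ext i j; exact i.elim0,
      ⟨Fin.elim0, fun i => i.elim0, fun j => j.elim0⟩⟩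
  obtain ⟨m, rfl⟩ : ∃ m, N = m + 1 := ⟨N - 1, by omega⟩
  -- real data
  have hxyne : ∀ (i : Fin (m+1)) (j : Fin m), x i ≠ y j := by
    intro i j h
    apply hne i j
    rw [hzx, hcy, h]
  have h1 : ∀ j : Fin m, x j.castSucc < y j :=
    fun j => lt_of_le_of_ne (hinter j).1 (hxyne j.castSucc j)
  have h2 : ∀ j : Fin m, y j < x j.succ :=
    fun j => lt_of_le_of_ne (hinter j).2 (fun h => hxyne j.succ j h.symm)
  have hx : StrictMono x := Fin.strictMono_iff_lt_succ.mpr fun i => (h1 i).trans (h2 i)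
  have hsub : ∀ (i : Fin (m+1)) (j : Fin m), x i - y j ≠ 0 :=
    fun i j => sub_ne_zero_of_ne (hxyne i j)
  obtain ⟨B, hB0, hBid⟩ := core_weights x y h1 h2
  set d : ℝ := ∑ i, x i - ∑ j : Fin m, y j with hd
  have hI2 : ∀ i k : Fin (m+1), i ≠ k → ∑ j, B j / ((x i - y j) * (x k - y j)) = -1 := by
    intro i k hik
    have hxik : x i - x k ≠ 0 := sub_ne_zero_of_ne (fun h => hik (hx.injective h))
    have hterm : ∀ j, B j / ((x i - y j) * (x k - y j))
        = (B j / (x k - y j) - B j / (x i - y j)) / (x i - x k) := by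
      intro j
      rw [eq_div_iff hxik]
      field_simp [hsub i j, hsub k j]
      ring
    rw [funext hterm, ← sum_div, sum_sub_distrib, hBid i, hBid k, div_eq_iff hxik]
    ring
    -- square roots of weights
  set b : Fin m → ℝ := fun j => Real.sqrt (B j) with hb
  have hb2 : ∀ j, b j * b j = B j := fun j => Real.mul_self_sqrt (hB0 j)
  -- the arrowhead matrix
  set M0 : Matrix (Fin (m+1)) (Fin (m+1)) ℂ := Matrix.of fun i k =>
    if hi : (i : ℕ) < m then
      (if hk : (k : ℕ) < m then (if i = k then (y ⟨i, hi⟩ : ℂ) else 0) else (b ⟨i, hi⟩ : ℂ))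
    else (if hk : (k : ℕ) < m then (b ⟨k, hk⟩ : ℂ) else (d : ℂ)) with hM0
  have hM0a : ∀ j k : Fin m, M0 j.castSucc k.castSucc = if j = k then (y j : ℂ) else 0 := by
    intro j k
    simp only [hM0, Matrix.of_apply, Fin.coe_castSucc, j.is_lt, k.is_lt, dif_pos, Fin.eta,
      Fin.castSucc_inj]
  have hM0b : ∀ j : Fin m, M0 j.castSucc (Fin.last m) = (b j : ℂ) := by
    intro j
    simp only [hM0, Matrix.of_apply, Fin.coe_castSucc, j.is_lt, dif_pos, Fin.val_last,
      lt_irrefl, dif_neg, Fin.eta, not_false_iff]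
  have hM0c : ∀ k : Fin m, M0 (Fin.last m) k.castSucc = (b k : ℂ) := by
    intro k
    simp only [hM0, Matrix.of_apply, Fin.coe_castSucc, k.is_lt, dif_pos, Fin.val_last,
      lt_irrefl, dif_neg, Fin.eta, not_false_iff]
  have hM0d : M0 (Fin.last m) (Fin.last m) = (d : ℂ) := by
    simp only [hM0, Matrix.of_apply, Fin.val_last, lt_irrefl, dif_neg, not_false_iff]
  -- eigenvectors
  set v : Fin (m+1) → Fin (m+1) → ℝ := fun i a =>
    if ha : (a : ℕ) < m then b ⟨a, ha⟩ / (x i - y ⟨a, ha⟩) else 1 with hv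
  have hva : ∀ (i : Fin (m+1)) (j : Fin m), v i j.castSucc = b j / (x i - y j) := by
    intro i j
    simp only [hv, Fin.coe_castSucc, j.is_lt, dif_pos, Fin.eta]
  have hvb : ∀ i : Fin (m+1), v i (Fin.last m) = 1 := by
    intro i
    simp only [hv, Fin.val_last, lt_irrefl, dif_neg, not_false_iff]
  set ρ : Fin (m+1) → ℝ := fun i => Real.sqrt (1 + ∑ j, B j / (x i - y j)^2) with hρ
  have hsum_nonneg : ∀ i, 0 ≤ ∑ j, B j / (x i - y j)^2 :=
    fun i => sum_nonneg fun j _ => div_nonneg (hB0 j) (sq_nonneg _)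
  have hρpos : ∀ i, 0 < ρ i := fun i => Real.sqrt_pos.mpr (by linarith [hsum_nonneg i])
  have hρsq : ∀ i, ρ i * ρ i = 1 + ∑ j, B j / (x i - y j)^2 :=
    fun i => Real.mul_self_sqrt (by linarith [hsum_nonneg i])
  -- dot products of the v's
  have hS : ∀ i k : Fin (m+1), ∑ a, v i a * v k a
      = (∑ j, B j / ((x i - y j) * (x k - y j))) + 1 := by
    intro i k
    rw [Fin.sum_univ_castSucc]
    congr 1
    · refine sum_congr rfl fun j _ => ?_
      rw [hva, hva, div_mul_div_comm, hb2]
    · rw [hvb, hvb, mul_one]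
  have hSii : ∀ i : Fin (m+1), ∑ a, v i a * v i a = ρ i * ρ i := by
    intro i
    rw [hS, hρsq i, add_comm]
    congr 1
    exact sum_congr rfl fun j _ => by rw [sq]
  have hSik : ∀ i k : Fin (m+1), i ≠ k → ∑ a, v i a * v k a = 0 := by
    intro i k hik
    rw [hS, hI2 i k hik]
    ring
  -- normalized eigenvectors
  set f : Fin (m+1) → Fin (m+1) → ℂ := fun i a => (((ρ i)⁻¹ * v i a : ℝ) : ℂ) with hf
  have hdot : ∀ i k, star (f i) ⬝ᵥ f k = (((ρ i)⁻¹ * (ρ k)⁻¹ * ∑ a, v i a * v k a : ℝ) : ℂ) := by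
    intro i k
    simp only [dotProduct, Pi.star_apply, hf, Complex.star_def, Complex.conj_ofReal,
      ← Complex.ofReal_mul, ← Complex.ofReal_sum]
    congr 1
    rw [mul_sum]
    exact sum_congr rfl fun a _ => by ring
  have horth : ∀ i k, star (f i) ⬝ᵥ f k = if i = k then (1:ℂ) else 0 := by
    intro i k
    rw [hdot]
    by_cases hik : i = k
    · subst hik
      rw [hSii i, if_pos rfl]
      rw [show (ρ i)⁻¹ * (ρ i)⁻¹ * (ρ i * ρ i) = ((ρ i)⁻¹ * ρ i) * ((ρ i)⁻¹ * ρ i) by ring,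
        inv_mul_cancel₀ (hρpos i).ne', one_mul, Complex.ofReal_one]
    · rw [hSik i k hik, if_neg hik]
      simp
  -- eigen equation for M0 on v
  have hMv : ∀ i : Fin (m+1), M0.mulVec (fun a => ((v i a : ℝ) : ℂ))
      = ((x i : ℝ) : ℂ) • (fun a => ((v i a : ℝ) : ℂ)) := by
    intro i
    funext a
    rw [Matrix.mulVec, dotProduct]
    induction a using Fin.lastCases with
    | last =>
      rw [Fin.sum_univ_castSucc]
      simp only [hM0c, hM0d, hva, hvb]
      have hr : ∑ k : Fin m, b k * (b k / (x i - y k)) + d = x i := by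
        have hBi := hBid i
        have e : ∀ k : Fin m, b k * (b k / (x i - y k)) = B k / (x i - y k) := fun k => by
          rw [mul_div_assoc', hb2]
        rw [funext e, hBi]
        ring
      simp only [Pi.smul_apply, smul_eq_mul, hvb, Complex.ofReal_one, mul_one]
      exact_mod_cast hr
    | cast j =>
      rw [Fin.sum_univ_castSucc]
      simp only [hM0a, hM0b, hva, hvb, Pi.smul_apply, smul_eq_mul, Complex.ofReal_one, mul_one,
        ite_mul, zero_mul, Finset.sum_ite_eq, mem_univ, if_pos]
      have hr : y j * (b j / (x i - y j)) + b j = x i * (b j / (x i - y j)) := by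
        field_simp [hsub i j]
        ring
      exact_mod_cast hr
  -- eigen equation for normalized f
  have hfeigen0 : ∀ i, M0.mulVec (f i) = ((x i : ℝ) : ℂ) • f i := by
    intro i
    have hfi : f i = (((ρ i)⁻¹ : ℝ) : ℂ) • (fun a => ((v i a : ℝ) : ℂ)) := by
      funext a
      simp [hf, Complex.ofReal_mul]
    rw [hfi, Matrix.mulVec_smul, hMv i, smul_comm]
  set M : Matrix (Fin (m+1)) (Fin (m+1)) ℂ :=
    α • (1 : Matrix (Fin (m+1)) (Fin (m+1)) ℂ) + β • M0 with hM
  have hMeig : ∀ i, M.mulVec (f i) = z i • f i := by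
    intro i
    rw [hM, Matrix.add_mulVec, Matrix.smul_mulVec, Matrix.smul_mulVec,
      Matrix.one_mulVec, hfeigen0 i, hzx i, smul_smul, ← add_smul]
    congr 1
    ring
  -- compression vectors
  set g : Fin m → (Fin (m+1) → ℂ) := fun j a => if a = j.castSucc then 1 else 0 with hg
  have hgorth : ∀ j k : Fin m, star (g j) ⬝ᵥ g k = if j = k then (1:ℂ) else 0 := by
    intro j k
    have h' : star (g j) ⬝ᵥ g k = if j.castSucc = k.castSucc then (1:ℂ) else 0 := by
      simp only [hg]
      simp [dotProduct, eq_comm]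
    rw [h']
    simp only [Fin.castSucc_inj]
  have hMcs : ∀ j k : Fin m, M j.castSucc k.castSucc = if j = k then c j else 0 := by
    intro j k
    rw [hM]
    simp only [Matrix.add_apply, Matrix.smul_apply, Matrix.one_apply, hM0a, Fin.castSucc_inj,
      smul_eq_mul, hcy]
    split_ifs with h
    · ring
    · ring
  have hMgv : ∀ k : Fin m, M.mulVec (g k) = fun a => M a k.castSucc := by
    intro k
    funext a
    simp only [hg]
    simp [Matrix.mulVec, dotProduct]
  have hcomp : ∀ j k : Fin m, star (g j) ⬝ᵥ M.mulVec (g k) = if j = k then c j else 0 := by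
    intro j k
    rw [hMgv k]
    calc star (g j) ⬝ᵥ (fun a => M a k.castSucc) = M j.castSucc k.castSucc := by
          simp only [hg]
          simp [dotProduct]
      _ = _ := hMcs j k
  -- diagonal compression C
  set C : Matrix (Fin (m+1-1)) (Fin (m+1-1)) ℂ :=
    Matrix.of (fun j k : Fin (m+1-1) => if j = k then c j else 0) with hC
  set e : Fin m → Fin m → ℂ := fun j a => if a = j then 1 else 0 with he
  have heorth : ∀ j k : Fin m, star (e j) ⬝ᵥ e k = if j = k then (1:ℂ) else 0 := by
    intro j k
    simp only [he]
    simp [dotProduct, eq_comm]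
  have hCe : ∀ k : Fin m, C.mulVec (e k) = c k • e k := by
    intro k
    funext j
    have h' : C.mulVec (e k) j = C j k := by
      simp only [he]
      simp [Matrix.mulVec, dotProduct]
    rw [h']
    simp only [hC, Matrix.of_apply, Pi.smul_apply, he, smul_eq_mul]
    split_ifs with h
    · rw [h, mul_one]
    · ring
  refine ⟨M, normal_of_hasONEigenbasis ⟨f, horth, hMeig⟩, ⟨f, horth, hMeig⟩, C,
    ⟨g, hgorth, fun j k => ?_⟩, normal_of_hasONEigenbasis ⟨e, heorth, hCe⟩,
    ⟨e, heorth, hCe⟩⟩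
  rw [hcomp j k]
  rfl
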